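/- For each e ∈ ℝ there exist an ℝ-linear map J : g → g and a ℂ-valued ℝ-bilinear alternating form ε on g such that: (1) J∘J = −id; (2) ω(Ju,Jv) = ω(u,v) for all u,v ∈ g, and ω(u,Ju) > 0 for all u ≠ 0; (3) ε(Ju,v) = i·ε(u,v) for all u,v ∈ g (ε is a (2,0)-form for J); (4) (ε∧ε̄)(X₁,X₂,X₃,T) = (1/2)(ω∧ω)(X₁,X₂,X₃,T), where ε̄(u,v) = conj(ε(u,v)); (5) Re ε([u,v],w) + Re ε([v,w],u) + Re ε([w,u],v) = 0 for all u,v,w ∈ g (Re ε is closed as a left-invariant form); and (6) Im ε(X₂+eT, X₃) = 0, i.e. Im ε vanishes on the Lagrangian subspace span{X₂+eT, X₃}. (Thus the left-invariant Lagrangian foliation of the Kodaira–Thurston manifold induced by h^e is special Lagrangian for a left-invariant generalized Calabi–Yau structure.) -/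
import Mathlib


noncomputable section

/-- The Lie algebra `g`, with coordinates in the basis `X₁, X₂, X₃, T`. -/
abbrev G4 : Type := ℝ × ℝ × ℝ × ℝ

/-- The bracket of `g`: the only nonvanishing basis bracket is `[X₁,X₂] = X₃`. -/
def b4 (X Y : G4) : G4 := (0, 0, X.1 * Y.2.1 - X.2.1 * Y.1, 0)

/-- The symplectic form `ω(X,Y) = 2π(x₁y₃ − x₃y₁ + x₂y₄ − x₄y₂)`. -/
def ω (u v : G4) : ℝ :=
  2 * Real.pi * (u.1 * v.2.2.1 - u.2.2.1 * v.1 + u.2.1 * v.2.2.2 - u.2.2.2 * v.2.1)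

/-- `ω` with values coerced into `ℂ`. -/
def ωc (u v : G4) : ℂ := ((ω u v : ℝ) : ℂ)

/-- The wedge of two `ℂ`-valued alternating bilinear forms, as a 4-form:
`(α∧β)(v₁,v₂,v₃,v₄) = Σ_σ sgn(σ)·α(v_{σ(1)},v_{σ(2)})·β(v_{σ(3)},v_{σ(4)})`,
summed over `σ` with `σ(1)<σ(2)`, `σ(3)<σ(4)`. -/
def wedge (α β : G4 → G4 → ℂ) (v1 v2 v3 v4 : G4) : ℂ :=
  α v1 v2 * β v3 v4 - α v1 v3 * β v2 v4 + α v1 v4 * β v2 v3 +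
    α v2 v3 * β v1 v4 - α v2 v4 * β v1 v3 + α v3 v4 * β v1 v2

def e1 : G4 := (1, 0, 0, 0)
def e2 : G4 := (0, 1, 0, 0)
def e3 : G4 := (0, 0, 1, 0)
def e4 : G4 := (0, 0, 0, 1)

/-- auxiliary complex structure -/
def Jmap (e : ℝ) : G4 →ₗ[ℝ] G4 where
  toFun u := (-u.2.2.1, e * u.2.1 - u.2.2.2, u.1, (1 + e^2) * u.2.1 - e * u.2.2.2)
  map_add' u v := by
    simp only [Prod.fst_add, Prod.snd_add, Prod.mk_add_mk]
    ext <;> simp <;> ring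
  map_smul' c u := by
    simp only [Prod.smul_fst, Prod.smul_snd, Prod.smul_mk, smul_eq_mul, RingHom.id_apply]
    ext <;> simp <;> ring

def θ1 : G4 → ℂ := fun u => (u.2.2.1 : ℂ) - Complex.I * (u.1 : ℂ)
def θ2 (e : ℝ) : G4 → ℂ := fun u => (u.2.2.2 : ℂ) - ((e : ℂ) + Complex.I) * (u.2.1 : ℂ)

def εmap (e : ℝ) : G4 →ₗ[ℝ] G4 →ₗ[ℝ] ℂ :=
  LinearMap.mk₂ ℝ
    (fun u v => Complex.I * (Real.pi : ℂ) * (θ1 u * θ2 e v - θ1 v * θ2 e u))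
    (by intro u u' v; simp only [θ1, θ2, Prod.fst_add, Prod.snd_add]; push_cast; ring)
    (by intro c u v
        simp only [θ1, θ2, Prod.smul_fst, Prod.smul_snd, smul_eq_mul, Complex.real_smul]
        push_cast; ring)
    (by intro u v v'; simp only [θ1, θ2, Prod.fst_add, Prod.snd_add]; push_cast; ring)
    (by intro c u v
        simp only [θ1, θ2, Prod.smul_fst, Prod.smul_snd, smul_eq_mul, Complex.real_smul]
        push_cast; ring)

/-- For each `e ∈ ℝ` there is a left-invariant generalized Calabi–Yau structure
`(ω, J, ε)` on the Kodaira–Thurston manifold for which the Lagrangian foliation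
induced by `h^e` (tangent to `span{X₂+eT, X₃}`) is special Lagrangian. -/
theorem stmt8 (e : ℝ) :
    ∃ (J : G4 →ₗ[ℝ] G4) (ε : G4 →ₗ[ℝ] G4 →ₗ[ℝ] ℂ),
      -- ε is alternating
      (∀ u : G4, ε u u = 0) ∧
      -- (1) J² = −id
      (∀ u : G4, J (J u) = -u) ∧
      -- (2) ω-compatibility and tamedness
      (∀ u v : G4, ω (J u) (J v) = ω u v) ∧
      (∀ u : G4, u ≠ 0 → 0 < ω u (J u)) ∧
      -- (3) ε is a (2,0)-form for J
      (∀ u v : G4, ε (J u) v = Complex.I * ε u v) ∧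
      -- (4) ε ∧ ε̄ = ω∧ω/2 (evaluated on the basis)
      (wedge (fun u v => ε u v) (fun u v => (starRingEnd ℂ) (ε u v)) e1 e2 e3 e4 =
        (1 / 2) * wedge ωc ωc e1 e2 e3 e4) ∧
      -- (5) Re ε is closed as a left-invariant form
      (∀ u v w : G4,
        (ε (b4 u v) w).re + (ε (b4 v w) u).re + (ε (b4 w u) v).re = 0) ∧
      -- (6) Im ε vanishes on the Lagrangian subspace span{X₂+eT, X₃}
      (ε ((0 : ℝ), (1 : ℝ), (0 : ℝ), e) e3).im = 0 := by
  refine ⟨Jmap e, εmap e, ?_, ?_, ?_, ?_, ?_, ?_, ?_, ?_⟩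
  · intro u; simp [εmap]
  · intro u
    simp only [Jmap, LinearMap.coe_mk, AddHom.coe_mk]
    ext <;> simp <;> ring
  · intro u v
    simp only [Jmap, LinearMap.coe_mk, AddHom.coe_mk, ω]
    ring
  · intro u hu
    have hS : 0 < u.1 ^ 2 + u.2.1 ^ 2 + u.2.2.1 ^ 2 + (e * u.2.1 - u.2.2.2) ^ 2 := by
      rcases lt_or_eq_of_le (by positivity :
          (0:ℝ) ≤ u.1 ^ 2 + u.2.1 ^ 2 + u.2.2.1 ^ 2 + (e * u.2.1 - u.2.2.2) ^ 2) with h | h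
      · exact h
      · exfalso
        have h1 : u.1 = 0 := by nlinarith [sq_nonneg u.1, sq_nonneg u.2.1, sq_nonneg u.2.2.1, sq_nonneg (e * u.2.1 - u.2.2.2)]
        have h2 : u.2.1 = 0 := by nlinarith [sq_nonneg u.1, sq_nonneg u.2.1, sq_nonneg u.2.2.1, sq_nonneg (e * u.2.1 - u.2.2.2)]
        have h3 : u.2.2.1 = 0 := by nlinarith [sq_nonneg u.1, sq_nonneg u.2.1, sq_nonneg u.2.2.1, sq_nonneg (e * u.2.1 - u.2.2.2)]
        have h4 : u.2.2.2 = 0 := by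
          have h5 : (e * u.2.1 - u.2.2.2) ^ 2 = 0 := by
            nlinarith [sq_nonneg u.1, sq_nonneg u.2.1, sq_nonneg u.2.2.1]
          have h6 : e * u.2.1 - u.2.2.2 = 0 := by
            exact pow_eq_zero_iff (by norm_num) |>.mp h5
          rw [h2, mul_zero, zero_sub, neg_eq_zero] at h6
          exact h6
        exact hu (by ext <;> assumption)
    have hω : ω u (Jmap e u) =
        2 * Real.pi * (u.1 ^ 2 + u.2.1 ^ 2 + u.2.2.1 ^ 2 + (e * u.2.1 - u.2.2.2) ^ 2) := by
      simp only [Jmap, LinearMap.coe_mk, AddHom.coe_mk, ω]; ring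
    rw [hω]
    have := Real.pi_pos
    positivity
  · intro u v
    have hθ1 : θ1 (Jmap e u) = Complex.I * θ1 u := by
      simp only [θ1, Jmap, LinearMap.coe_mk, AddHom.coe_mk]
      push_cast
      ring_nf
      simp [Complex.ext_iff]
    have hθ2 : θ2 e (Jmap e u) = Complex.I * θ2 e u := by
      simp only [θ2, Jmap, LinearMap.coe_mk, AddHom.coe_mk]
      push_cast
      ring_nf
      simp [Complex.ext_iff]
    simp only [εmap, LinearMap.mk₂_apply, hθ1, hθ2]
    ring
  · simp only [εmap, wedge, ωc, ω, LinearMap.mk₂_apply, θ1, θ2, e1, e2, e3, e4]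
    norm_num
    ring_nf
    simp [Complex.ext_iff]
  · intro u v w
    simp only [εmap, b4, LinearMap.mk₂_apply, θ1, θ2]
    simp [Complex.ext_iff, Complex.add_re, Complex.mul_re, Complex.mul_im]
    ring_nf
  · simp only [εmap, LinearMap.mk₂_apply, θ1, θ2, e3]
    simp [Complex.ext_iff]

end
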